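/- The map F_V(α,β): (x,y) ↦ (y+P, x+P) with P = (α−β)/(x−y) satisfies the Yang–Baxter relation: for all parameters α₁,α₂,α₃ and all points where the compositions are defined, F_V^{23}(α₂,α₃)∘F_V^{13}(α₁,α₃)∘F_V^{12}(α₁,α₂) = F_V^{12}(α₁,α₂)∘F_V^{13}(α₁,α₃)∘F_V^{23}(α₂,α₃). -/

import Mathlib

open Function

variable {K : Type*} [Field K]

/-- lift a map on pairs to act on coordinates 1,2 of a triple -/
def lift12 {X : Type*} (f : X × X → X × X) : X × X × X → X × X × X :=
  fun p => ((f (p.1, p.2.1)).1, (f (p.1, p.2.1)).2, p.2.2)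

/-- lift to coordinates 1,3 -/
def lift13 {X : Type*} (f : X × X → X × X) : X × X × X → X × X × X :=
  fun p => ((f (p.1, p.2.2)).1, p.2.1, (f (p.1, p.2.2)).2)

/-- lift to coordinates 2,3 -/
def lift23 {X : Type*} (f : X × X → X × X) : X × X × X → X × X × X :=
  fun p => (p.1, (f (p.2.1, p.2.2)).1, (f (p.2.1, p.2.2)).2)

def FVMap (a b : K) : K × K → K × K :=
  fun p => (p.2 + (a - b)/(p.1 - p.2), p.1 + (a - b)/(p.1 - p.2))

/-!
Put `d = x - y`, `e = y - z`, `A = α₁ - α₂`, `B = α₂ - α₃`, so that `α₁ - α₃ = A + B`.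
Each factor swaps two coordinates and shifts both by the same potential, so both sides send
`(x, y, z)` to `(z, y, x)` shifted by sums of potentials. Equality of the first and of the third
shifts are two rational identities in `d, e, A, B`, and the middle shift is the sum of the other
two. After clearing `d` and `e`, the remaining denominators are `e d + A` and `e d - B`.
-/

section FieldIdentities

variable {d e A B : K}

theorem yangBaxter_FV_first_coord_identity (hd : d ≠ 0) (he : e ≠ 0) (hdA : e + A / d ≠ 0)
    (heB : d - B / e ≠ 0) :
    (A + B) / (e + A / d) = B / e + A / (e + (A + B) / (d - B / e)) := by
  rw [add_div' _ _ _ hd] at hdA ⊢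
  rw [sub_div' he] at heB ⊢
  have hA : e * d + A ≠ 0 := (div_ne_zero_iff.mp hdA).1
  have hB : d * e - B ≠ 0 := (div_ne_zero_iff.mp heB).1
  have h : e + (A + B) / ((d * e - B) / e) = e * (e * d + A) / (d * e - B) := by
    rw [div_div_eq_mul_div, eq_div_iff hB, add_mul, div_mul_cancel₀ _ hB]
    ring
  rw [h]
  field_simp
  ring

theorem yangBaxter_FV_third_coord_identity (hd : d ≠ 0) (he : e ≠ 0) (hdA : e + A / d ≠ 0)
    (heB : d - B / e ≠ 0) :
    A / d + B / (d - (A + B) / (e + A / d)) = (A + B) / (d - B / e) := by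
  rw [add_div' _ _ _ hd] at hdA ⊢
  rw [sub_div' he] at heB ⊢
  have hA : e * d + A ≠ 0 := (div_ne_zero_iff.mp hdA).1
  have hB : d * e - B ≠ 0 := (div_ne_zero_iff.mp heB).1
  have h : d - (A + B) / ((e * d + A) / d) = d * (d * e - B) / (e * d + A) := by
    rw [div_div_eq_mul_div, eq_div_iff hA, sub_mul, div_mul_cancel₀ _ hA]
    ring
  rw [h]
  field_simp
  ring

end FieldIdentities

theorem yangBaxter_FV_general (a1 a2 a3 x y z : K)
    (h1 : (x - y) ≠ 0)
    (h2 : ((lift12 (FVMap a1 a2) (x, y, z)).1 - (lift12 (FVMap a1 a2) (x, y, z)).2.2) ≠ 0)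
    (h4 : (y - z) ≠ 0)
    (h5 : ((lift23 (FVMap a2 a3) (x, y, z)).1 - (lift23 (FVMap a2 a3) (x, y, z)).2.2) ≠ 0) :
    lift23 (FVMap a2 a3) (lift13 (FVMap a1 a3) (lift12 (FVMap a1 a2) (x, y, z))) =
      lift12 (FVMap a1 a2) (lift13 (FVMap a1 a3) (lift23 (FVMap a2 a3) (x, y, z))) := by
  simp only [lift12, lift13, lift23, FVMap] at h2 h5 ⊢
  have hdA : y - z + (a1 - a2) / (x - y) ≠ 0 := fun h => h2 (by linear_combination h)
  have heB : x - y - (a2 - a3) / (y - z) ≠ 0 := fun h => h5 (by linear_combination h)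
  have first := yangBaxter_FV_first_coord_identity h1 h4 hdA heB
  have third := yangBaxter_FV_third_coord_identity h1 h4 hdA heB
  refine Prod.ext ?_ (Prod.ext ?_ ?_)
  · linear_combination first
  · linear_combination first + third
  · linear_combination third

theorem yangBaxter_FV (a1 a2 a3 x y z : K)
    (h1 : (x - y) ≠ 0)
    (h2 : ((lift12 (FVMap a1 a2) (x, y, z)).1 - (lift12 (FVMap a1 a2) (x, y, z)).2.2) ≠ 0)
    (h3 : ((lift13 (FVMap a1 a3) (lift12 (FVMap a1 a2) (x, y, z))).2.1 - (lift13 (FVMap a1 a3) (lift12 (FVMap a1 a2) (x, y, z))).2.2) ≠ 0)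
    (h4 : (y - z) ≠ 0)
    (h5 : ((lift23 (FVMap a2 a3) (x, y, z)).1 - (lift23 (FVMap a2 a3) (x, y, z)).2.2) ≠ 0)
    (h6 : ((lift13 (FVMap a1 a3) (lift23 (FVMap a2 a3) (x, y, z))).1 - (lift13 (FVMap a1 a3) (lift23 (FVMap a2 a3) (x, y, z))).2.1) ≠ 0) :
    lift23 (FVMap a2 a3) (lift13 (FVMap a1 a3) (lift12 (FVMap a1 a2) (x, y, z))) =
      lift12 (FVMap a1 a2) (lift13 (FVMap a1 a3) (lift23 (FVMap a2 a3) (x, y, z))) :=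
  yangBaxter_FV_general a1 a2 a3 x y z h1 h2 h4 h5
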